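/- Neural ODEs cannot represent annulus-vs-ball labeling: for any homeomorphism φ : ℝᵈ → ℝᵈ and any affine map L(x) = ⟨w,x⟩ + b, the composed function g(x) = L(φ(x)) cannot satisfy g(x) ≤ −1 for all ‖x‖ ≤ r₁ and g(x) ≥ 1 for all r₂ ≤ ‖x‖ ≤ r₃, where 0 < r₁ < r₂ < r₃. -/

import Mathlib

/-!
The sublevel set `S = {y | ⟪w, y⟫ + b ≤ -1}` is a half-space (or everything, if `w = 0`),
hence connected and unbounded, and it contains `φ 0`. Since `φ` maps bounded sets to bounded
sets, `φ⁻¹ S` is a connected unbounded set containing `0`, so by the intermediate value theorem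
for `‖·‖` it meets the sphere of radius `r₂`, where the annulus condition forces `g ≥ 1`.
-/

open Bornology Set
open scoped RealInnerProductSpace

theorem Bornology.IsBounded.image_of_continuous {X Y : Type*} [PseudoMetricSpace X]
    [ProperSpace X] [PseudoMetricSpace Y] {f : X → Y} (hf : Continuous f) {s : Set X}
    (hs : IsBounded s) : IsBounded (f '' s) :=
  (hs.isCompact_closure.image hf).isBounded.subset (image_mono subset_closure)

theorem not_isBounded_setOf_inner_le {E : Type*} [NormedAddCommGroup E]
    [InnerProductSpace ℝ E] [Nontrivial E] {w p : E} {c : ℝ} (hp : ⟪w, p⟫ ≤ c) :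
    ¬IsBounded {y | ⟪w, y⟫ ≤ c} := by
  obtain ⟨v, hv, hwv⟩ : ∃ v : E, v ≠ 0 ∧ ⟪w, v⟫ ≤ 0 := by
    obtain ⟨u, hu⟩ := exists_ne (0 : E)
    rcases le_total ⟪w, u⟫ 0 with h | h
    · exact ⟨u, hu, h⟩
    · exact ⟨-u, neg_ne_zero.mpr hu, by rw [inner_neg_right]; linarith⟩
  have hray : ∀ t : ℝ, 0 ≤ t → p + t • v ∈ {y | ⟪w, y⟫ ≤ c} := fun t ht => by
    simp only [mem_ofPred_eq, inner_add_right, real_inner_smul_right]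
    nlinarith
  rintro hbdd
  obtain ⟨R, hR⟩ := isBounded_iff_forall_norm_le.mp hbdd
  have hv' : 0 < ‖v‖ := norm_pos_iff.mpr hv
  set t := (R + ‖p‖ + 1) / ‖v‖
  have ht : t * ‖v‖ = R + ‖p‖ + 1 := div_mul_cancel₀ _ hv'.ne'
  have hR0 : 0 ≤ R := (norm_nonneg _).trans (hR p hp)
  have hfar : t * ‖v‖ - ‖p‖ ≤ ‖p + t • v‖ := by
    have := norm_sub_norm_le (t • v) (-p)
    rw [norm_smul, Real.norm_of_nonneg (by positivity), norm_neg, sub_neg_eq_add, add_comm] at this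
    exact this
  linarith [hR _ (hray t (by positivity))]

theorem Homeomorph.exists_norm_eq_of_isPreconnected {E F : Type*} [SeminormedAddCommGroup E]
    [ProperSpace E] [PseudoMetricSpace F] (φ : E ≃ₜ F) {S : Set F} (hS : IsPreconnected S)
    (hS_unbdd : ¬IsBounded S) {x₀ : E} (hx₀ : φ x₀ ∈ S) {r : ℝ} (hr : ‖x₀‖ ≤ r) :
    ∃ x, ‖x‖ = r ∧ φ x ∈ S := by
  have hT : IsPreconnected (φ ⁻¹' S) := φ.isPreconnected_preimage.mpr hS
  have hT_unbdd : ¬IsBounded (φ ⁻¹' S) := fun hT_bdd => hS_unbdd <| by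
    simpa only [φ.image_preimage] using hT_bdd.image_of_continuous φ.continuous
  simp only [isBounded_iff_forall_norm_le, not_exists, not_forall, not_le] at hT_unbdd
  obtain ⟨y, hyT, hy⟩ := hT_unbdd r
  obtain ⟨x, hxT, hx⟩ :=
    hT.intermediate_value hx₀ hyT continuous_norm.continuousOn ⟨hr, hy.le⟩
  exact ⟨x, hx, hxT⟩

/-- Neural ODEs cannot represent the annulus-vs-ball labeling: for any
homeomorphism `φ` of `ℝᵈ` and any affine map `L x = ⟨w, x⟩ + b`, the function
`g = L ∘ φ` cannot be `≤ -1` on the ball `‖x‖ ≤ r₁` and `≥ 1` on the annulus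
`r₂ ≤ ‖x‖ ≤ r₃`, where `0 < r₁ < r₂ < r₃`. -/
theorem stmt_11 {d : ℕ} (hd : 0 < d) (r₁ r₂ r₃ : ℝ)
    (h0 : 0 < r₁) (h12 : r₁ < r₂) (h23 : r₂ < r₃)
    (φ : EuclideanSpace ℝ (Fin d) ≃ₜ EuclideanSpace ℝ (Fin d))
    (w : EuclideanSpace ℝ (Fin d)) (b : ℝ) :
    ¬ ((∀ x : EuclideanSpace ℝ (Fin d), ‖x‖ ≤ r₁ →
          (inner ℝ w (φ x) : ℝ) + b ≤ -1) ∧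
       (∀ x : EuclideanSpace ℝ (Fin d), r₂ ≤ ‖x‖ → ‖x‖ ≤ r₃ →
          (inner ℝ w (φ x) : ℝ) + b ≥ 1)) := by
  rintro ⟨h_ball, h_annulus⟩
  have : Nonempty (Fin d) := ⟨⟨0, hd⟩⟩
  set S := {y | ⟪w, y⟫ ≤ -1 - b}
  have hφ0 : φ 0 ∈ S := by
    have h_origin := h_ball 0 (by simpa using h0.le)
    simp only [S, mem_ofPred_eq]
    linarith
  have hS : IsPreconnected S :=
    (convex_halfSpace_le (innerₛₗ ℝ w).isLinear _).isPreconnected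
  obtain ⟨x, hx, hxS⟩ := φ.exists_norm_eq_of_isPreconnected hS
    (not_isBounded_setOf_inner_le hφ0) hφ0 (norm_zero.trans_le (h0.trans h12).le)
  have h_sphere := h_annulus x hx.ge (hx.le.trans h23.le)
  simp only [S, mem_ofPred_eq] at hxS
  linarith
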